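/- Let A be a unital Banach algebra and X a unit-linked Banach A-bimodule. Let p < 1 and θ ≥ 0. Suppose f : A → X satisfies f(0) = 0 and g : A → X satisfies g(0) = g(1) = 0, such that ‖f(a + λb + c²) − f(a) − λf(b) − c·f(c) − g(c)·c‖ ≤ θ‖f(c)‖ and ‖g(λab + λc) − λa·g(b) − λ·g(a)·b − λg(c)‖ ≤ θ(‖a‖^p + ‖b‖^p + ‖c‖^p) for all a, b, c ∈ A and all λ ∈ ℂ with |λ| = 1. Then the map δ(c) := lim_{n→∞} 2^{−n} g(2^n c) is a ℂ-linear Jordan derivation, i.e., δ(a²) = a·δ(a) + δ(a)·a for all a ∈ A. -/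

import Mathlib

open Filter Topology MulOpposite

set_option linter.unusedSectionVars false
set_option linter.unusedVariables false

/-! Hyers' direct method. The second inequality makes `g` approximately additive, approximately
unit-homogeneous and approximately a derivation (`g(ab) ≈ a·g(b) + g(a)·b`), with errors of size
`O(1 + ‖·‖^p)`. Since `p < 1`, these errors vanish after rescaling by `2⁻ⁿ` at the points `2ⁿx`,
so the limit `δ` exists, is additive and unit-homogeneous (hence `ℂ`-linear), and satisfies
`δ(ab) = a·δ(b) + g(a)·b`. The first inequality makes `f` linear and then bounds `g(2ⁿ·1)`,
so `δ(1) = 0`; `b = 1` gives `g = δ`, and `b = a` the Jordan identity. -/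

theorem Complex.exists_norm_eq_one_re_eq {t : ℝ} (ht : |t| ≤ 1) : ∃ ν : ℂ, ‖ν‖ = 1 ∧ ν.re = t :=
  ⟨Complex.exp (Real.arccos t * Complex.I), Complex.norm_exp_ofReal_mul_I _, by
    rw [Complex.exp_ofReal_mul_I_re, Real.cos_arccos (neg_le_of_abs_le ht) (le_of_abs_le ht)]⟩

open ComplexConjugate in
theorem AddMonoidHom.map_smul_of_map_smul_of_norm_eq_one {V W : Type*} [AddCommGroup V]
    [Module ℂ V] [AddCommGroup W] [Module ℂ W] (T : V →+ W)
    (hT : ∀ ν : ℂ, ‖ν‖ = 1 → ∀ x, T (ν • x) = ν • T x) (μ : ℂ) (x : V) :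
    T (μ • x) = μ • T x := by
  have hreal : ∀ (r : ℝ) (x : V), T ((r : ℂ) • x) = (r : ℂ) • T x := by
    intro r x
    obtain ⟨m, hm⟩ := exists_nat_gt (|r| / 2)
    have hm0 : (0 : ℝ) < m := (div_nonneg (abs_nonneg r) zero_le_two).trans_lt hm
    obtain ⟨ν, hν, hνre⟩ := Complex.exists_norm_eq_one_re_eq (t := r / (2 * m)) (by
      rw [abs_div, abs_of_pos (show (0 : ℝ) < 2 * m by positivity), div_le_one (by positivity)]
      linarith)
    have hr : (r : ℂ) = m * (ν + conj ν) := by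
      have : (m : ℂ) ≠ 0 := by exact_mod_cast hm0.ne'
      rw [Complex.add_conj, hνre]; push_cast; field_simp
    rw [hr, mul_smul, mul_smul, Nat.cast_smul_eq_nsmul, Nat.cast_smul_eq_nsmul, map_nsmul,
      add_smul, add_smul, map_add, hT ν hν, hT (conj ν) (by rwa [Complex.norm_conj])]
  rw [← Complex.re_add_im μ, add_smul, mul_smul, map_add, hreal, hreal, hT _ Complex.norm_I,
    add_smul, mul_smul]

theorem summable_inv_two_pow_mul_add_rpow {p : ℝ} (hp : p < 1) (C D : ℝ) :
    Summable fun n : ℕ => ((2 : ℝ) ^ n)⁻¹ * (C + D * ((2 : ℝ) ^ n) ^ p) := by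
  have hq : (2 : ℝ) ^ p / 2 < 1 := by
    rw [div_lt_one two_pos]
    simpa using Real.rpow_lt_rpow_of_exponent_lt one_lt_two hp
  have h := ((summable_geometric_two).mul_left C).add
    ((summable_geometric_of_lt_one (by positivity) hq).mul_left D)
  refine h.congr fun n => ?_
  rw [← Real.rpow_pow_comm zero_le_two, div_pow, div_pow, one_pow]
  field_simp

section Rescaling

variable {E F : Type*} [NormedAddCommGroup E] [NormedSpace ℂ E] [NormedAddCommGroup F]
  [NormedSpace ℂ F]

theorem norm_two_pow_smul_rpow (n : ℕ) (x : E) (p : ℝ) :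
    ‖(2 : ℂ) ^ n • x‖ ^ p = ‖x‖ ^ p * ((2 : ℝ) ^ n) ^ p := by
  rw [norm_smul, norm_pow, Complex.norm_two, mul_comm,
    Real.mul_rpow (norm_nonneg x) (by positivity)]

theorem tendsto_inv_two_pow_smul_zero {u : ℕ → F} {p C D : ℝ} (hp : p < 1)
    (hu : ∀ n, ‖u n‖ ≤ C + D * ((2 : ℝ) ^ n) ^ p) :
    Tendsto (fun n => ((2 : ℂ) ^ n)⁻¹ • u n) atTop (𝓝 0) := by
  refine squeeze_zero_norm (fun n => ?_)
    (summable_inv_two_pow_mul_add_rpow hp C D).tendsto_atTop_zero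
  rw [norm_smul, norm_inv, norm_pow, Complex.norm_two]
  exact mul_le_mul_of_nonneg_left (hu n) (by positivity)

noncomputable def hyersSeq (g : E → F) (c : E) (n : ℕ) : F :=
  ((2 : ℂ) ^ n)⁻¹ • g ((2 : ℂ) ^ n • c)

variable {g : E → F} {p C D : ℝ}

theorem cauchySeq_hyersSeq (hp : p < 1)
    (hg : ∀ x y, ‖g (x + y) - g x - g y‖ ≤ C + D * (‖x‖ ^ p + ‖y‖ ^ p)) (c : E) :
    CauchySeq (hyersSeq g c) := by
  refine cauchySeq_of_summable_dist <|
    (summable_inv_two_pow_mul_add_rpow hp (C / 2) (D * ‖c‖ ^ p)).of_nonneg_of_le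
      (fun _ => dist_nonneg) fun n => ?_
  set y := (2 : ℂ) ^ n • c
  have hy : (2 : ℂ) ^ n.succ • c = y + y := by rw [pow_succ, mul_smul, two_smul, smul_add]
  have hdiff : hyersSeq g c n - hyersSeq g c n.succ =
      -(((2 : ℂ) ^ n)⁻¹ * 2⁻¹) • (g (y + y) - g y - g y) := by
    rw [hyersSeq, hyersSeq, hy, pow_succ, mul_inv]
    module
  rw [dist_eq_norm, hdiff, norm_smul, norm_neg, norm_mul, norm_inv, norm_pow, norm_inv,
    Complex.norm_two, mul_assoc]
  refine mul_le_mul_of_nonneg_left ?_ (by positivity)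
  calc 2⁻¹ * ‖g (y + y) - g y - g y‖ ≤ 2⁻¹ * (C + D * (‖y‖ ^ p + ‖y‖ ^ p)) := by
        gcongr; exact hg y y
    _ = C / 2 + D * ‖c‖ ^ p * ((2 : ℝ) ^ n) ^ p := by rw [norm_two_pow_smul_rpow]; ring

variable {δ : E → F}

theorem map_add_of_tendsto_hyersSeq (hp : p < 1)
    (hg : ∀ x y, ‖g (x + y) - g x - g y‖ ≤ C + D * (‖x‖ ^ p + ‖y‖ ^ p))
    (hδ : ∀ c, Tendsto (hyersSeq g c) atTop (𝓝 (δ c))) (x y : E) :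
    δ (x + y) = δ x + δ y := by
  have hdefect : Tendsto (fun n => ((2 : ℂ) ^ n)⁻¹ •
      (g ((2 : ℂ) ^ n • x + (2 : ℂ) ^ n • y) - g ((2 : ℂ) ^ n • x) - g ((2 : ℂ) ^ n • y)))
      atTop (𝓝 0) :=
    tendsto_inv_two_pow_smul_zero (D := D * (‖x‖ ^ p + ‖y‖ ^ p)) hp fun n =>
      (hg _ _).trans_eq (by rw [norm_two_pow_smul_rpow, norm_two_pow_smul_rpow]; ring)
  have h := tendsto_nhds_unique (((hδ (x + y)).sub (hδ x)).sub (hδ y))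
    (hdefect.congr fun n => by simp only [hyersSeq, smul_add, smul_sub])
  rwa [sub_sub, sub_eq_zero] at h

theorem map_smul_of_tendsto_hyersSeq (hp : p < 1) {μ : ℂ}
    (hg : ∀ x, ‖g (μ • x) - μ • g x‖ ≤ C + D * ‖x‖ ^ p)
    (hδ : ∀ c, Tendsto (hyersSeq g c) atTop (𝓝 (δ c))) (x : E) :
    δ (μ • x) = μ • δ x := by
  have hdefect : Tendsto (fun n => ((2 : ℂ) ^ n)⁻¹ •
      (g (μ • (2 : ℂ) ^ n • x) - μ • g ((2 : ℂ) ^ n • x))) atTop (𝓝 0) :=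
    tendsto_inv_two_pow_smul_zero (D := D * ‖x‖ ^ p) hp fun n =>
      (hg _).trans_eq (by rw [norm_two_pow_smul_rpow]; ring)
  have h := tendsto_nhds_unique ((hδ (μ • x)).sub ((hδ x).const_smul μ))
    (hdefect.congr fun n => by simp only [hyersSeq, smul_sub, smul_comm μ])
  rwa [sub_eq_zero] at h

end Rescaling

section Bimodule

variable {A X : Type*} [NormedRing A] [NormedAlgebra ℂ A] [NormedAddCommGroup X]
  [NormedSpace ℂ X] [Module A X] [Module Aᵐᵒᵖ X] [IsScalarTower ℂ A X] [IsScalarTower ℂ Aᵐᵒᵖ X]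

theorem map_mul_of_tendsto_hyersSeq [IsBoundedSMul A X] {g δ : A → X} {p C D : ℝ} (hp : p < 1)
    {a : A} (hg : ∀ b, ‖g (a * b) - a • g b - op b • g a‖ ≤ C + D * ‖b‖ ^ p)
    (hδ : ∀ c, Tendsto (hyersSeq g c) atTop (𝓝 (δ c))) (b : A) :
    δ (a * b) = a • δ b + op b • g a := by
  have hdefect : Tendsto (fun n => ((2 : ℂ) ^ n)⁻¹ • (g (a * (2 : ℂ) ^ n • b)
      - a • g ((2 : ℂ) ^ n • b) - op ((2 : ℂ) ^ n • b) • g a)) atTop (𝓝 0) :=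
    tendsto_inv_two_pow_smul_zero (D := D * ‖b‖ ^ p) hp fun n =>
      (hg _).trans_eq (by rw [norm_two_pow_smul_rpow]; ring)
  have h := tendsto_nhds_unique (((hδ (a * b)).sub ((hδ b).const_smul a)).sub
    (tendsto_const_nhds (x := op b • g a))) (hdefect.congr fun n => by
      simp only [hyersSeq, smul_sub, mul_smul_comm, op_smul, smul_assoc, smul_comm a,
        inv_smul_smul₀ (pow_ne_zero n (two_ne_zero' ℂ))])
  rwa [sub_sub, sub_eq_zero] at h

theorem norm_map_smul_one_le {f g : A → X} {θ : ℝ}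
    (hf : ∀ (μ : ℂ) x, f (μ • x) = μ • f x)
    (h : ∀ c : A, ‖f (c ^ 2) - c • f c - op c • g c‖ ≤ θ * ‖f c‖) {t : ℂ} (ht : t ≠ 0) :
    ‖g (t • 1)‖ ≤ θ * ‖f 1‖ := by
  have hsq : (t • (1 : A)) ^ 2 = t • t • (1 : A) := by rw [pow_two, smul_mul_assoc, one_mul]
  have := h (t • 1)
  rw [hsq, hf t (t • 1), smul_assoc, one_smul, op_smul, op_one, smul_assoc, one_smul, sub_self,
    zero_sub, norm_neg, hf, norm_smul, norm_smul] at this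
  exact le_of_mul_le_mul_left (this.trans_eq (by ring)) (norm_pos_iff.mpr ht)

end Bimodule

section

variable {A X : Type*}
  [NormedRing A] [NormedAlgebra ℂ A] [CompleteSpace A]
  [NormedAddCommGroup X] [NormedSpace ℂ X] [CompleteSpace X]
  [Module A X] [Module Aᵐᵒᵖ X]
  [IsBoundedSMul A X] [IsBoundedSMul Aᵐᵒᵖ X]
  [SMulCommClass A Aᵐᵒᵖ X]
  [IsScalarTower ℂ A X] [IsScalarTower ℂ Aᵐᵒᵖ X]

/-- A Jordan derivation from `A` into the bimodule `X`: a `ℂ`-linear map `δ` with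
`δ(a²) = a·δ(a) + δ(a)·a`. -/
def IsJordanDeriv (δ : A → X) : Prop :=
  (∀ x y : A, δ (x + y) = δ x + δ y) ∧ (∀ (μ : ℂ) (x : A), δ (μ • x) = μ • δ x) ∧
    ∀ a : A, δ (a ^ 2) = a • δ a + op a • δ a

/-- A generalized Jordan derivation: a `ℂ`-linear map `d` such that there is a Jordan
derivation `δ` with `d(a²) = a·d(a) + δ(a)·a`. -/
def IsGenJordanDeriv (d : A → X) : Prop :=
  (∀ x y : A, d (x + y) = d x + d y) ∧ (∀ (μ : ℂ) (x : A), d (μ • x) = μ • d x) ∧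
    ∃ δ : A → X, IsJordanDeriv δ ∧ ∀ a : A, d (a ^ 2) = a • d a + op a • δ a

theorem stmt_general (f g : A → X) (θ p : ℝ) (hp : p < 1)
    (hf0 : f 0 = 0) (hg0 : g 0 = 0) (hg1 : g 1 = 0)
    (h1 : ∀ (a b c : A) (μ : ℂ), ‖μ‖ = 1 →
      ‖f (a + μ • b + c ^ 2) - f a - μ • f b - c • f c - op c • g c‖ ≤ θ * ‖f c‖)
    (h2 : ∀ (a b c : A) (μ : ℂ), ‖μ‖ = 1 →
      ‖g (μ • (a * b) + μ • c) - μ • a • g b - μ • op b • g a - μ • g c‖ ≤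
        θ * (‖a‖ ^ p + ‖b‖ ^ p + ‖c‖ ^ p)) :
    ∃ δ : A → X, (∀ c : A, Tendsto (fun n : ℕ => ((2 : ℂ) ^ n)⁻¹ • g ((2 : ℂ) ^ n • c)) atTop (𝓝 (δ c))) ∧ IsJordanDeriv δ := by
  have hg_add (x y : A) :
      ‖g (x + y) - g x - g y‖ ≤ θ * ‖(1 : A)‖ ^ p + θ * (‖x‖ ^ p + ‖y‖ ^ p) := by
    simpa [hg1, mul_add, add_assoc] using h2 1 x y 1 norm_one
  have hg_smul (μ : ℂ) (hμ : ‖μ‖ = 1) (x : A) :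
      ‖g (μ • x) - μ • g x‖ ≤ θ * (‖(0 : A)‖ ^ p + ‖(0 : A)‖ ^ p) + θ * ‖x‖ ^ p := by
    simpa [mul_add] using h2 0 0 x μ hμ
  have hg_mul (a b : A) :
      ‖g (a * b) - a • g b - op b • g a‖ ≤ θ * (‖a‖ ^ p + ‖(0 : A)‖ ^ p) + θ * ‖b‖ ^ p := by
    simpa [hg0, mul_add, add_right_comm] using h2 a b 0 1 norm_one
  have hf_add (x y : A) : f (x + y) = f x + f y := by
    simpa [hf0, sub_sub, sub_eq_zero] using h1 x y 0 1 norm_one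
  have hf_smul (μ : ℂ) (x : A) : f (μ • x) = μ • f x :=
    (AddMonoidHom.mk' f hf_add).map_smul_of_map_smul_of_norm_eq_one (fun ν hν y => by
      simpa [hf0, sub_eq_zero] using h1 0 y 0 ν hν) μ x
  choose δ hδ using fun c => cauchySeq_tendsto_of_complete (cauchySeq_hyersSeq hp hg_add c)
  have hδ_add := map_add_of_tendsto_hyersSeq hp hg_add hδ
  have hδ_one : δ 1 = 0 := by
    refine tendsto_nhds_unique (hδ 1)
      (tendsto_inv_two_pow_smul_zero (C := θ * ‖f 1‖) (D := 0) hp fun n => ?_)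
    simpa using norm_map_smul_one_le hf_smul (fun c => by simpa [hf0] using h1 0 0 c 1 norm_one)
      (pow_ne_zero n (two_ne_zero' ℂ))
  have hδ_mul (a b : A) : δ (a * b) = a • δ b + op b • g a :=
    map_mul_of_tendsto_hyersSeq hp (hg_mul a) hδ b
  have hg_eq (a : A) : g a = δ a := by simpa [hδ_one] using (hδ_mul a 1).symm
  refine ⟨δ, hδ, hδ_add, fun μ x => ?_, fun a => by rw [pow_two, hδ_mul, hg_eq]⟩
  exact (AddMonoidHom.mk' δ hδ_add).map_smul_of_map_smul_of_norm_eq_one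
    (fun ν hν => map_smul_of_tendsto_hyersSeq hp (hg_smul ν hν) hδ) μ x

theorem stmt (f g : A → X) (θ p : ℝ) (hθ : 0 ≤ θ) (hp : p < 1)
    (hf0 : f 0 = 0) (hg0 : g 0 = 0) (hg1 : g 1 = 0)
    (h1 : ∀ (a b c : A) (μ : ℂ), ‖μ‖ = 1 →
      ‖f (a + μ • b + c ^ 2) - f a - μ • f b - c • f c - op c • g c‖ ≤ θ * ‖f c‖)
    (h2 : ∀ (a b c : A) (μ : ℂ), ‖μ‖ = 1 →
      ‖g (μ • (a * b) + μ • c) - μ • a • g b - μ • op b • g a - μ • g c‖ ≤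
        θ * (‖a‖ ^ p + ‖b‖ ^ p + ‖c‖ ^ p)) :
    ∃ δ : A → X, (∀ c : A, Tendsto (fun n : ℕ => ((2 : ℂ) ^ n)⁻¹ • g ((2 : ℂ) ^ n • c)) atTop (𝓝 (δ c))) ∧ IsJordanDeriv δ :=
  stmt_general f g θ p hp hf0 hg0 hg1 h1 h2
end
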